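/- Let t ≥ 1 be an integer, let n = 2^t − 1, and let k be an odd integer with 1 ≤ k ≤ n. Set m = 1 + ((k−1)/2)·t. Then there exist random variables ξ_1, …, ξ_n : Ω → {0, 1} on the uniform probability space Ω = {0,1}^m such that Pr[ξ_j = 1] = Pr[ξ_j = 0] = 1/2 for every j ∈ {1, …, n}, and the variables are k-wise independent: for every subset S ⊆ {1, …, n} with |S| ≤ k, the family of random variables (ξ_j)_{j ∈ S} is mutually independent. -/

import Mathlib

open scoped Classical

/-- The uniform probability of an event on the sample space `Ω = {0,1}^m`
(each of the `2^m` points has probability `2^{-m}`). -/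
noncomputable def unifPr (m : ℕ) (p : (Fin m → Bool) → Prop) : ℝ :=
  ((Finset.univ.filter fun ω : Fin m → Bool => p ω).card : ℝ) / 2 ^ m



open Finset Matrix

section Aux

lemma fiber_card_aux {m s : ℕ} (L : (Fin m → ZMod 2) →ₗ[ZMod 2] (Fin s → ZMod 2))
    (hL : Function.Surjective L) (y : Fin s → ZMod 2) :
    (Finset.univ.filter fun x => L x = y).card * 2 ^ s = 2 ^ m := by
  have hfib : ∀ y₁ y₂ : Fin s → ZMod 2,
      (Finset.univ.filter fun x => L x = y₁).card
        = (Finset.univ.filter fun x => L x = y₂).card := by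
    intro y₁ y₂
    obtain ⟨x₁, hx₁⟩ := hL y₁
    obtain ⟨x₂, hx₂⟩ := hL y₂
    apply Finset.card_bij' (fun x _ => x + (x₂ - x₁)) (fun x _ => x + (x₁ - x₂))
    · intro a ha
      simp only [mem_filter, mem_univ, true_and] at ha ⊢
      simp [map_add, map_sub, ha, hx₁, hx₂]
    · intro a ha
      simp only [mem_filter, mem_univ, true_and] at ha ⊢
      simp [map_add, map_sub, ha, hx₁, hx₂]
    · intro a _; abel
    · intro a _; abel
  have hsum := Finset.card_eq_sum_card_fiberwise
    (s := (univ : Finset (Fin m → ZMod 2))) (t := univ) (f := fun x => L x)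
    (fun x _ => mem_univ _)
  have hcards : Fintype.card (Fin m → ZMod 2) = 2 ^ m := by
    simp [Fintype.card_fun]
  have hcardt : Fintype.card (Fin s → ZMod 2) = 2 ^ s := by
    simp [Fintype.card_fun]
  calc (Finset.univ.filter fun x => L x = y).card * 2 ^ s
      = ∑ _y' : Fin s → ZMod 2, (Finset.univ.filter fun x => L x = y).card := by
        rw [Finset.sum_const, card_univ, hcardt, smul_eq_mul, mul_comm]
    _ = ∑ y' : Fin s → ZMod 2, (Finset.univ.filter fun x => L x = y').card := by
        exact Finset.sum_congr rfl fun y' _ => hfib y y'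
    _ = 2 ^ m := by rw [← hsum, card_univ, hcards]


lemma surj_of_rows_li {m s : ℕ} (M : Matrix (Fin s) (Fin m) (ZMod 2))
    (hli : LinearIndependent (ZMod 2) (fun p : Fin s => M p)) :
    Function.Surjective M.mulVecLin := by
  have hinj : Function.Injective (Mᵀ.mulVecLin) := by
    rw [injective_iff_map_eq_zero]
    intro c hc
    have h0 : ∑ p, c p • M p = 0 := by
      funext i
      have := congrFun hc i
      simpa [Matrix.mulVecLin_apply, Matrix.mulVec, dotProduct, Matrix.transpose,
        Finset.sum_apply, mul_comm] using this
    have := Fintype.linearIndependent_iff.mp hli c h0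
    funext p; exact this p
  have hrankT : Mᵀ.rank = s := by
    rw [Matrix.rank]
    rw [LinearMap.finrank_range_of_inj hinj]
    simp
  have hrank : M.rank = s := by rw [← Matrix.rank_transpose]; exact hrankT
  rw [← LinearMap.range_eq_top]
  apply Submodule.eq_top_of_finrank_eq
  rw [← Matrix.rank] at *
  rw [hrank]; simp


lemma bch_li (t d : ℕ) {ι : Type*} [Fintype ι]
    (α : ι → GaloisField 2 t) (hinj : Function.Injective α)
    (hcard : Fintype.card ι ≤ 2 * d + 1) :
    LinearIndependent (ZMod 2)
      (fun i : ι => ((1 : ZMod 2), fun l : Fin d => α i ^ (2 * (l : ℕ) + 1))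
        : ι → ZMod 2 × (Fin d → GaloisField 2 t)) := by
  rw [Fintype.linearIndependent_iff]
  intro c hc
  have h1 : ∑ i, c i = 0 := by
    have := congrArg Prod.fst hc
    rw [Prod.fst_sum] at this
    simpa using this
  have h2 : ∀ l : Fin d, ∑ i, c i • α i ^ (2 * (l : ℕ) + 1) = 0 := by
    intro l
    have h := congrArg Prod.snd hc
    rw [Prod.snd_sum] at h
    have h := congrFun h l
    rw [Finset.sum_apply] at h
    simpa using h
  set c' : ι → GaloisField 2 t := fun i => algebraMap (ZMod 2) (GaloisField 2 t) (c i) with hc'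
  have hsq : ∀ i, c' i * c' i = c' i := by
    intro i
    have hz : ∀ z : ZMod 2, z * z = z := by decide
    simp only [hc']
    rw [← _root_.map_mul, hz]
  have key : ∀ e : ℕ, e ≤ 2 * d → ∑ i, c' i * α i ^ e = 0 := by
    intro e
    induction e using Nat.strong_induction_on with
    | _ e ih =>
      intro he
      rcases Nat.even_or_odd e with heven | hodd
      · rcases Nat.eq_zero_or_pos e with h0 | hpos
        · subst h0
          simp only [pow_zero, mul_one]
          calc ∑ i, c' i = algebraMap (ZMod 2) (GaloisField 2 t) (∑ i, c i) := by rw [map_sum]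
            _ = 0 := by rw [h1, map_zero]
        · obtain ⟨e', he'⟩ := heven
          have he'lt : e' < e := by omega
          have ihe : ∑ i, c' i * α i ^ e' = 0 := ih e' he'lt (by omega)
          have hsq2 := congrArg (fun x => x ^ 2) ihe
          rw [sum_pow_char] at hsq2
          calc ∑ i, c' i * α i ^ e
              = ∑ i, (c' i * α i ^ e') ^ 2 := by
                apply Finset.sum_congr rfl
                intro i _
                have hee : e = e' * 2 := by omega
                rw [mul_pow, ← pow_mul, pow_two (c' i), hsq i, hee]
            _ = 0 := by rw [hsq2]; simp
      · obtain ⟨l, hl⟩ := hodd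
        have hld : l < d := by omega
        have h := h2 ⟨l, hld⟩
        simp only [Algebra.smul_def] at h
        rw [hl]
        exact h
  set s := Fintype.card ι with hs
  let eι : Fin s ≃ ι := (Fintype.equivFin ι).symm
  let V := Matrix.vandermonde (fun p : Fin s => α (eι p))
  have hdet : V.det ≠ 0 := by
    rw [Matrix.det_vandermonde_ne_zero_iff]
    intro p q hpq
    have hpq' : α (eι p) = α (eι q) := hpq
    exact eι.injective (hinj hpq')
  have hvec : (fun p : Fin s => c' (eι p)) ᵥ* V = 0 := by
    funext q
    have hq : (q : ℕ) ≤ 2 * d := by have := q.2; omega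
    have hk := key q hq
    rw [← Equiv.sum_comp eι (fun i => c' i * α i ^ (q : ℕ))] at hk
    rw [Matrix.vecMul]
    simp only [dotProduct, Matrix.vandermonde]
    exact hk
  have hc0 := Matrix.eq_zero_of_vecMul_eq_zero hdet hvec
  intro i
  have h3 : c' (eι (eι.symm i)) = 0 := congrFun hc0 (eι.symm i)
  rw [Equiv.apply_symm_apply] at h3
  have hinj2 : Function.Injective (algebraMap (ZMod 2) (GaloisField 2 t)) := (algebraMap (ZMod 2) (GaloisField 2 t)).injective
  apply hinj2
  rw [map_zero]
  exact h3


/-- bit to `ZMod 2` -/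
def bz (b : Bool) : ZMod 2 := if b then 1 else 0

noncomputable def xiAux {m n : ℕ} (v : Fin n → Fin m → ZMod 2) (j : Fin n)
    (ω : Fin m → Bool) : Bool :=
  decide ((∑ i, v j i * bz (ω i)) = 1)

lemma xiAux_eq_iff {m n : ℕ} (v : Fin n → Fin m → ZMod 2) (j : Fin n)
    (ω : Fin m → Bool) (bb : Bool) :
    (xiAux v j ω = bb) ↔ (∑ i, v j i * bz (ω i)) = bz bb := by
  have hz : ∀ z : ZMod 2, z = 0 ∨ z = 1 := by decide
  unfold xiAux
  rcases hz (∑ i, v j i * bz (ω i)) with h | h <;> rw [h] <;> cases bb <;>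
    simp [bz] <;> decide

lemma unifPr_congr {m : ℕ} {p q : (Fin m → Bool) → Prop} (h : ∀ ω, p ω ↔ q ω) :
    unifPr m p = unifPr m q := by
  have : p = q := funext fun ω => propext (h ω)
  rw [this]

end Aux


/-- For `n = 2^t - 1` and odd `k` with `1 ≤ k ≤ n`, setting `m = 1 + ((k-1)/2)·t`, there exist
`n` random bits on the uniform space `{0,1}^m`, each uniform on `{0,1}`, that are `k`-wise
independent: every subfamily indexed by a set `S` of size at most `k` is mutually independent,
i.e. for every choice of values the probability of the joint event is the product of the
individual probabilities. -/
theorem exists_kwise_independent_bits (t : ℕ) (ht : 1 ≤ t) (n k m : ℕ)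
    (hn : n = 2 ^ t - 1) (hodd : Odd k) (hk1 : 1 ≤ k) (hkn : k ≤ n)
    (hm : m = 1 + ((k - 1) / 2) * t) :
    ∃ ξ : Fin n → (Fin m → Bool) → Bool,
      (∀ j : Fin n, unifPr m (fun ω => ξ j ω = true) = 1 / 2 ∧
        unifPr m (fun ω => ξ j ω = false) = 1 / 2) ∧
      (∀ S : Finset (Fin n), S.card ≤ k → ∀ b : Fin n → Bool,
        unifPr m (fun ω => ∀ j ∈ S, ξ j ω = b j)
          = ∏ j ∈ S, unifPr m (fun ω => ξ j ω = b j)) := by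
  have ht' : t ≠ 0 := by omega
  set d := (k - 1) / 2 with hdd
  have hd : k = 2 * d + 1 := by
    obtain ⟨r, hr⟩ := hodd; omega
  have hmd : m = 1 + d * t := hm
  -- the field
  haveI : Fintype (GaloisField 2 t) := Fintype.ofFinite _
  have hcardF : Fintype.card (GaloisField 2 t) = 2 ^ t := by
    rw [← Nat.card_eq_fintype_card]; exact GaloisField.card 2 t ht'
  obtain ⟨α⟩ : Nonempty (Fin n ↪ GaloisField 2 t) := by
    apply Function.Embedding.nonempty_of_card_le
    rw [Fintype.card_fin, hcardF, hn]; omega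
  -- basis and linear equivalence to `Fin m → ZMod 2`
  have hfr : Module.finrank (ZMod 2) (GaloisField 2 t) = t := GaloisField.finrank 2 ht'
  let bF : Module.Basis (Fin t) (ZMod 2) (GaloisField 2 t) :=
    Module.finBasisOfFinrankEq (ZMod 2) (GaloisField 2 t) hfr
  let bW : Module.Basis ((Fin 1) ⊕ (Σ _ : Fin d, Fin t)) (ZMod 2)
      (ZMod 2 × (Fin d → GaloisField 2 t)) :=
    (Module.Basis.singleton (Fin 1) (ZMod 2)).prod (Pi.basis fun _ : Fin d => bF)
  have hcardIdx : Fintype.card ((Fin 1) ⊕ (Σ _ : Fin d, Fin t)) = m := by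
    simp [hmd]
  let e := (bW.reindex (Fintype.equivFinOfCardEq hcardIdx)).equivFun
  let w : Fin n → ZMod 2 × (Fin d → GaloisField 2 t) :=
    fun j => (1, fun l => α j ^ (2 * (l : ℕ) + 1))
  let v : Fin n → (Fin m → ZMod 2) := fun j => e (w j)
  -- the bit <-> ZMod 2 equivalence
  let eB : Bool ≃ ZMod 2 :=
    ⟨bz, fun z => decide (z = 1), by intro b; cases b <;> decide, by decide⟩
  let EΩ : (Fin m → Bool) ≃ (Fin m → ZMod 2) := Equiv.piCongrRight fun _ => eB
  -- master counting statement
  have master : ∀ S : Finset (Fin n), S.card ≤ k → ∀ b : Fin n → Bool,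
      ((Finset.univ.filter
          fun ω : Fin m → Bool => ∀ j ∈ S, xiAux v j ω = b j).card) * 2 ^ S.card
        = 2 ^ m := by
    intro S hS b
    let es : Fin S.card ≃ ↥S := (Fintype.equivFinOfCardEq (Fintype.card_coe S)).symm
    let M : Matrix (Fin S.card) (Fin m) (ZMod 2) := fun p => v (es p)
    have hli : LinearIndependent (ZMod 2) (fun p : Fin S.card => M p) := by
      have h0 := bch_li t d (fun j : ↥S => α j)
        (fun a b hab => Subtype.ext (α.injective hab))
        (by rw [Fintype.card_coe]; omega)
      have h1 := h0.map' e.toLinearMap e.ker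
      exact h1.comp es es.injective
    have hsurj := surj_of_rows_li M hli
    have hfc := fiber_card_aux M.mulVecLin hsurj (fun p => bz (b (es p)))
    have hcount : (Finset.univ.filter
          fun ω : Fin m → Bool => ∀ j ∈ S, xiAux v j ω = b j).card
        = (Finset.univ.filter
          fun x : Fin m → ZMod 2 => M.mulVecLin x = fun p => bz (b (es p))).card := by
      apply Finset.card_equiv EΩ
      intro ω
      simp only [Finset.mem_filter, Finset.mem_univ, true_and]
      constructor
      · intro h
        funext p
        have hx := (xiAux_eq_iff v (es p) ω (b (es p))).mp (h (es p) (es p).2)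
        exact hx
      · intro h j hj
        apply (xiAux_eq_iff v j ω (b j)).mpr
        have hx : ∑ i, v ((es (es.symm ⟨j, hj⟩)) : Fin n) i * bz (ω i)
            = bz (b ((es (es.symm ⟨j, hj⟩)) : Fin n)) := congrFun h (es.symm ⟨j, hj⟩)
        rw [Equiv.apply_symm_apply] at hx
        exact hx
    rw [hcount]
    exact hfc
  -- probability of joint events
  have hpr : ∀ S : Finset (Fin n), S.card ≤ k → ∀ b : Fin n → Bool,
      unifPr m (fun ω => ∀ j ∈ S, xiAux v j ω = b j) = (1 / 2 : ℝ) ^ S.card := by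
    intro S hS b
    have h := master S hS b
    have h2 : ((Finset.univ.filter
        fun ω : Fin m → Bool => ∀ j ∈ S, xiAux v j ω = b j).card : ℝ) * 2 ^ S.card
        = 2 ^ m := by exact_mod_cast congrArg Nat.cast h
    simp only [unifPr]
    rw [div_eq_iff (by positivity)]
    rw [div_pow, one_pow]
    rw [div_mul_eq_mul_div, eq_div_iff (by positivity)]
    rw [one_mul]
    convert h2 using 4
  have hsingle : ∀ (j : Fin n) (bb : Bool),
      unifPr m (fun ω => xiAux v j ω = bb) = 1 / 2 := by
    intro j bb
    have h1 : unifPr m (fun ω => xiAux v j ω = bb)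
        = unifPr m (fun ω => ∀ j' ∈ ({j} : Finset (Fin n)), xiAux v j' ω = bb) := by
      apply unifPr_congr; intro ω; simp
    rw [h1]
    have h2 := hpr {j} (by simpa using hk1) (fun _ => bb)
    simpa using h2
  refine ⟨xiAux v, fun j => ⟨hsingle j true, hsingle j false⟩, ?_⟩
  intro S hS b
  rw [hpr S hS b]
  have : ∀ j ∈ S, unifPr m (fun ω => xiAux v j ω = b j) = 1 / 2 :=
    fun j _ => hsingle j (b j)
  rw [Finset.prod_congr rfl this, Finset.prod_const]
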